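/- (Combinatorial estimate) For any p ∈ ℕ, l ∈ ℕ, and positive weights a_n := n e^n ‖V^{(n)}‖_{∞,1} with Σ_n a_n =: K < ∞, one has Σ_{n_1,…,n_l ≥ 1} [p n_1][(p+n_1−1)n_2]⋯[(p+n_1+⋯+n_{l−1}−l+1)n_l] ‖V^{(n_1)}‖_{∞,1}⋯‖V^{(n_l)}‖_{∞,1} ≤ e^p l! K^l. -/
import Mathlib
set_option maxHeartbeats 1000000


open scoped BigOperators

private lemma pi_hasSum {f : ℕ+ → ℝ} (hf0 : ∀ n, 0 ≤ f n) (hf : Summable f) :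
    ∀ l : ℕ, HasSum (fun n : Fin l → ℕ+ => ∏ q : Fin l, f (n q)) ((∑' m, f m) ^ l) := by
  intro l
  induction l with
  | zero =>
    simp only [Finset.univ_eq_empty, Finset.prod_empty, pow_zero]
    exact hasSum_single (f := fun _ : Fin 0 → ℕ+ => (1 : ℝ)) default
      (fun b hb => absurd (Subsingleton.elim b default) hb)
  | succ l ih =>
    have hprod : Summable fun x : ℕ+ × (Fin l → ℕ+) => f x.1 * ∏ q, f (x.2 q) :=
      Summable.mul_of_nonneg (g := fun n : Fin l → ℕ+ => ∏ q : Fin l, f (n q)) hf ih.summable hf0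
        (fun n => Finset.prod_nonneg fun q _ => hf0 _)
    have h2 : HasSum (fun x : ℕ+ × (Fin l → ℕ+) => f x.1 * ∏ q, f (x.2 q))
        ((∑' m, f m) * (∑' m, f m) ^ l) := HasSum.mul (g := fun n : Fin l → ℕ+ => ∏ q : Fin l, f (n q)) hf.hasSum ih hprod
    let e : (Fin (l + 1) → ℕ+) ≃ ℕ+ × (Fin l → ℕ+) :=
      (Fin.consEquiv fun _ => ℕ+).symm
    have := (Equiv.hasSum_iff (f := fun x : ℕ+ × (Fin l → ℕ+) => f x.1 * ∏ q : Fin l, f (x.2 q)) e).mpr h2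
    rw [pow_succ']
    have heq : (fun n : Fin (l+1) → ℕ+ => ∏ q : Fin (l+1), f (n q))
        = (fun x : ℕ+ × (Fin l → ℕ+) => f x.1 * ∏ q : Fin l, f (x.2 q)) ∘ e := by
      funext n
      rw [Fin.prod_univ_succ]
      rfl
    rw [heq]
    exact this

/-- **Combinatorial estimate.**
For any `p, l ∈ ℕ` and nonnegative weights `w n = ‖V^{(n)}‖_{∞,1}` with
`Σ_n n e^n w n ≤ K`, one has
`Σ_{n_1,…,n_l ≥ 1} [p n_1][(p+n_1−1)n_2]⋯[(p+n_1+⋯+n_{l−1}−l+1)n_l] w(n_1)⋯w(n_l)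
  ≤ e^p l! K^l`.
Here the sum ranges over tuples of positive integers; the `q`-th factor (for
`q = 0, …, l-1` zero-based) is `(p + n_0 + ⋯ + n_{q-1} − q) · n_q`. -/
theorem combinatorial_estimate (p l : ℕ) (w : ℕ → ℝ) (hw : ∀ n, 0 ≤ w n) (K : ℝ)
    (hsum : Summable fun n : ℕ => (n : ℝ) * Real.exp n * w n)
    (hK : (∑' n : ℕ, (n : ℝ) * Real.exp n * w n) ≤ K) :
    (∑' n : Fin l → ℕ+,
        (∏ q : Fin l,
          (((p : ℝ) + ∑ r ∈ Finset.Iio q, ((n r : ℕ) : ℝ) - (q : ℕ)) * ((n q : ℕ) : ℝ)))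
          * ∏ q : Fin l, w (n q))
      ≤ Real.exp p * (l.factorial : ℝ) * K ^ l := by
  classical
  set f : ℕ+ → ℝ := fun m => (m : ℝ) * Real.exp m * w m with hf_def
  have hf0 : ∀ m, 0 ≤ f m := fun m => by
    have := hw (m : ℕ)
    positivity
  have hf : Summable f := hsum.comp_injective PNat.coe_injective
  set S : ℝ := ∑' m, f m with hS_def
  have hS0 : 0 ≤ S := tsum_nonneg hf0
  have hSK : S ≤ K := by
    refine le_trans ?_ hK
    exact Summable.tsum_le_tsum_of_inj (fun m : ℕ+ => (m : ℕ)) PNat.coe_injective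
      (fun c _ => by have := hw c; positivity) (fun m => le_rfl) hf hsum
  have hpi := pi_hasSum hf0 hf l
  -- termwise bound
  have key : ∀ n : Fin l → ℕ+,
      (∏ q : Fin l,
          (((p : ℝ) + ∑ r ∈ Finset.Iio q, ((n r : ℕ) : ℝ) - (q : ℕ)) * ((n q : ℕ) : ℝ)))
          * ∏ q : Fin l, w (n q)
        ≤ Real.exp p * (l.factorial : ℝ) * ∏ q : Fin l, f (n q) := by
    intro n
    set T : ℝ := ∑ q : Fin l, ((n q : ℕ) : ℝ) with hT
    have hT0 : 0 ≤ T := Finset.sum_nonneg fun q _ => by positivity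
    have hfac_nonneg : ∀ q : Fin l,
        0 ≤ (p : ℝ) + ∑ r ∈ Finset.Iio q, ((n r : ℕ) : ℝ) - (q : ℕ) := by
      intro q
      have h1 : ((q : ℕ) : ℝ) ≤ ∑ r ∈ Finset.Iio q, ((n r : ℕ) : ℝ) := by
        have := Finset.card_nsmul_le_sum (Finset.Iio q)
          (fun r => ((n r : ℕ) : ℝ)) 1 (fun r _ => by
            show (1:ℝ) ≤ ((n r : ℕ) : ℝ); exact_mod_cast (n r).one_le)
        simpa [Fin.card_Iio, nsmul_eq_mul] using this
      have hp : (0:ℝ) ≤ p := Nat.cast_nonneg p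
      linarith
    have step1 : (∏ q : Fin l,
          (((p : ℝ) + ∑ r ∈ Finset.Iio q, ((n r : ℕ) : ℝ) - (q : ℕ)) * ((n q : ℕ) : ℝ)))
        ≤ ∏ q : Fin l, (((p : ℝ) + T) * ((n q : ℕ) : ℝ)) := by
      refine Finset.prod_le_prod (fun q _ => mul_nonneg (hfac_nonneg q) (by positivity)) ?_
      intro q _
      refine mul_le_mul_of_nonneg_right ?_ (by positivity)
      have hsub : ∑ r ∈ Finset.Iio q, ((n r : ℕ) : ℝ) ≤ T :=
        Finset.sum_le_sum_of_subset_of_nonneg (Finset.subset_univ _)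
          (fun r _ _ => by positivity)
      have hq : (0:ℝ) ≤ (q : ℕ) := Nat.cast_nonneg _
      linarith
    have step2 : ∏ q : Fin l, (((p : ℝ) + T) * ((n q : ℕ) : ℝ))
        = ((p : ℝ) + T) ^ l * ∏ q : Fin l, ((n q : ℕ) : ℝ) := by
      rw [Finset.prod_mul_distrib, Finset.prod_const, Finset.card_univ, Fintype.card_fin]
    have step3 : ((p : ℝ) + T) ^ l ≤ (l.factorial : ℝ) * Real.exp ((p : ℝ) + T) := by
      have h := Real.pow_div_factorial_le_exp (x := (p : ℝ) + T) (by positivity) l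
      have hl : (0:ℝ) < l.factorial := by exact_mod_cast l.factorial_pos
      rw [div_le_iff₀ hl] at h
      linarith [h]
    have hexp : Real.exp ((p : ℝ) + T) = Real.exp p * ∏ q : Fin l, Real.exp ((n q : ℕ) : ℝ) := by
      rw [Real.exp_add, hT, Real.exp_sum]
    have hprodf : ∏ q : Fin l, f (n q)
        = (∏ q : Fin l, ((n q : ℕ) : ℝ)) * (∏ q : Fin l, Real.exp ((n q : ℕ) : ℝ))
          * ∏ q : Fin l, w (n q) := by
      simp [hf_def, Finset.prod_mul_distrib]
    have hw0 : 0 ≤ ∏ q : Fin l, w (n q) := Finset.prod_nonneg fun q _ => hw _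
    calc (∏ q : Fin l,
          (((p : ℝ) + ∑ r ∈ Finset.Iio q, ((n r : ℕ) : ℝ) - (q : ℕ)) * ((n q : ℕ) : ℝ)))
          * ∏ q : Fin l, w (n q)
        ≤ (((p : ℝ) + T) ^ l * ∏ q : Fin l, ((n q : ℕ) : ℝ)) * ∏ q : Fin l, w (n q) := by
          refine mul_le_mul_of_nonneg_right ?_ hw0
          rw [← step2]; exact step1
      _ ≤ (((l.factorial : ℝ) * Real.exp ((p : ℝ) + T)) * ∏ q : Fin l, ((n q : ℕ) : ℝ))
            * ∏ q : Fin l, w (n q) := by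
          refine mul_le_mul_of_nonneg_right (mul_le_mul_of_nonneg_right step3 ?_) hw0
          positivity
      _ = Real.exp p * (l.factorial : ℝ) * ∏ q : Fin l, f (n q) := by
          rw [hexp, hprodf]; ring
  -- sum up
  have hdom : Summable fun n : Fin l → ℕ+ =>
      Real.exp p * (l.factorial : ℝ) * ∏ q : Fin l, f (n q) :=
    (hpi.summable).mul_left _
  have hlhs_sum : Summable fun n : Fin l → ℕ+ =>
      (∏ q : Fin l,
          (((p : ℝ) + ∑ r ∈ Finset.Iio q, ((n r : ℕ) : ℝ) - (q : ℕ)) * ((n q : ℕ) : ℝ)))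
          * ∏ q : Fin l, w (n q) := by
    refine Summable.of_nonneg_of_le (fun n => ?_) key hdom
    refine mul_nonneg (Finset.prod_nonneg fun q _ => mul_nonneg ?_ (by positivity))
      (Finset.prod_nonneg fun q _ => hw _)
    · -- nonneg of factor
      have h1 : ((q : ℕ) : ℝ) ≤ ∑ r ∈ Finset.Iio q, ((n r : ℕ) : ℝ) := by
        have := Finset.card_nsmul_le_sum (Finset.Iio q)
          (fun r => ((n r : ℕ) : ℝ)) 1 (fun r _ => by
            show (1:ℝ) ≤ ((n r : ℕ) : ℝ); exact_mod_cast (n r).one_le)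
        simpa [Fin.card_Iio, nsmul_eq_mul] using this
      have hp : (0:ℝ) ≤ p := Nat.cast_nonneg p
      linarith
  calc (∑' n : Fin l → ℕ+,
        (∏ q : Fin l,
          (((p : ℝ) + ∑ r ∈ Finset.Iio q, ((n r : ℕ) : ℝ) - (q : ℕ)) * ((n q : ℕ) : ℝ)))
          * ∏ q : Fin l, w (n q))
      ≤ ∑' n : Fin l → ℕ+, Real.exp p * (l.factorial : ℝ) * ∏ q : Fin l, f (n q) :=
        Summable.tsum_le_tsum key hlhs_sum hdom
    _ = Real.exp p * (l.factorial : ℝ) * S ^ l := by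
        rw [tsum_mul_left, hpi.tsum_eq]
    _ ≤ Real.exp p * (l.factorial : ℝ) * K ^ l := by
        refine mul_le_mul_of_nonneg_left (pow_le_pow_left₀ hS0 hSK l) ?_
        positivity
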